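/- arXiv:1806.07091 — 6 statements merged into one kernel-verified Lean document; each statement's English description precedes it below -/
import Mathlib

section
/- There exist absolute constants C > 0 and c > 0 such that the following holds. Let G be an abelian group, let A ⊆ G be a finite set with |A| ≥ 2, and let d ≥ 1 be a real number such that E_4^+(A, B) ≤ d · |A| · |B|^3 for every nonempty finite set B ⊆ G. Then |A − A|^{35} · d^{13} ≥ C · |A|^{48} / (log |A|)^c. -/
open Finset
open scoped Pointwise

/-- The representation function `r_{A−B}(x) = #{(a,b) ∈ A × B : x = a − b}`. -/
def rSub {G : Type*} [AddCommGroup G] [DecidableEq G] (A B : Finset G) (x : G) : ℕ :=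
  ((A ×ˢ B).filter fun ab => ab.1 - ab.2 = x).card

/-- The fourth order additive energy `E_4^+(A,B) = Σ_x r_{A−B}(x)^4`; the summand is
supported on the difference set `A − B`. -/
def E4 {G : Type*} [AddCommGroup G] [DecidableEq G] (A B : Finset G) : ℕ :=
  ∑ x ∈ A - B, (rSub A B x) ^ 4

/-!
Write `r(s) = r_{A−A}(s)`, `A_s = A ∩ (A + s)` (so `|A_s| = r(s)`) and
`E_k(A, B) = Σ_x r_{A−B}(x)^k`. Pigeonholing dyadically twice gives a set `Q ⊆ A − A` of `M`
differences with `r(s) ≈ Δ` and `|A − A_s| ≈ ρ` on `Q`, and `|A|² ≲ MΔ` up to a factor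
`log|A| · log|A − A|`. Cauchy–Schwarz on each `A_s` gives `(|A| r(s))² ≤ |A − A_s| E_2(A, A_s)`,
and `Σ_s E_2(A, A_s) ≤ E_3(A, A)`, so `M |A|² Δ² ≲ ρ E_3(A, A)`; also
`MΔρ ≤ Σ_s r(s) |A − A_s| ≤ E_2(A, A − A)`. Together, up to logarithms,
`|A|^8 ≲ |A − A| E_3(A, A) E_2(A, A − A)`. Hölder bounds `E_3(A, A)^4 ≤ |A − A| E_4(A, A)^3`
and `E_2(A, A − A)^3 ≤ (|A| |A − A|)² E_4(A, A − A)`, and the hypothesis bounds both fourth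
energies (with `B = A` and `B = A − A`).
-/

namespace HigherEnergy

variable {G : Type*} [AddCommGroup G] [DecidableEq G]

def energy (k : ℕ) (A B : Finset G) : ℕ := ∑ x ∈ A - B, rSub A B x ^ k

lemma E4_eq_energy (A B : Finset G) : E4 A B = energy 4 A B := rfl

lemma energy_zero (A B : Finset G) : energy 0 A B = (A - B).card := by
  simp [energy]

lemma energy_one (A B : Finset G) : energy 1 A B = A.card * B.card := by
  rw [← card_product, card_eq_sum_card_fiberwise (f := fun p : G × G => p.1 - p.2) (t := A - B)
    fun p hp => by rw [mem_coe, mem_product] at hp; exact sub_mem_sub hp.1 hp.2]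
  simp [energy, rSub]

lemma sq_energy_le {i j k : ℕ} (h : i + k = 2 * j) (A B : Finset G) :
    energy j A B ^ 2 ≤ energy i A B * energy k A B :=
  sum_sq_le_sum_mul_sum_of_sq_le_mul _ (fun _ _ => Nat.zero_le _) (fun _ _ => Nat.zero_le _)
    fun x _ => by rw [← pow_add, ← pow_mul, h, mul_comm]

lemma energy_three_pow_four_le (A B : Finset G) :
    energy 3 A B ^ 4 ≤ (A - B).card * E4 A B ^ 3 := by
  rw [E4_eq_energy]
  have h₃ := sq_energy_le (i := 2) (j := 3) (k := 4) rfl A B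
  have h₂ := sq_energy_le (i := 0) (j := 2) (k := 4) rfl A B
  rw [energy_zero] at h₂
  calc energy 3 A B ^ 4 = (energy 3 A B ^ 2) ^ 2 := by ring
    _ ≤ (energy 2 A B * energy 4 A B) ^ 2 := by gcongr
    _ = energy 2 A B ^ 2 * energy 4 A B ^ 2 := by ring
    _ ≤ ((A - B).card * energy 4 A B) * energy 4 A B ^ 2 := by gcongr
    _ = (A - B).card * energy 4 A B ^ 3 := by ring

lemma energy_two_pow_three_le (A B : Finset G) :
    energy 2 A B ^ 3 ≤ (A.card * B.card) ^ 2 * E4 A B := by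
  rw [E4_eq_energy]
  have h₂ := sq_energy_le (i := 1) (j := 2) (k := 3) rfl A B
  have h₃ := sq_energy_le (i := 2) (j := 3) (k := 4) rfl A B
  rw [energy_one] at h₂
  rcases Nat.eq_zero_or_pos (energy 2 A B) with h₀ | h₀
  · simp [h₀]
  refine le_of_mul_le_mul_right ?_ h₀
  calc energy 2 A B ^ 3 * energy 2 A B = (energy 2 A B ^ 2) ^ 2 := by ring
    _ ≤ (A.card * B.card * energy 3 A B) ^ 2 := by gcongr
    _ = (A.card * B.card) ^ 2 * energy 3 A B ^ 2 := by ring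
    _ ≤ (A.card * B.card) ^ 2 * (energy 2 A B * energy 4 A B) := by gcongr
    _ = (A.card * B.card) ^ 2 * energy 4 A B * energy 2 A B := by ring

def quadruples (A B : Finset G) : Finset ((G × G) × (G × G)) :=
  {p ∈ (A ×ˢ B) ×ˢ (A ×ˢ B) | p.1.1 - p.1.2 = p.2.1 - p.2.2}

def triples (A B : Finset G) : Finset ((G × G) × (G × G) × (G × G)) :=
  {p ∈ (A ×ˢ B) ×ˢ (A ×ˢ B) ×ˢ (A ×ˢ B) |
    p.1.1 - p.1.2 = p.2.1.1 - p.2.1.2 ∧ p.1.1 - p.1.2 = p.2.2.1 - p.2.2.2}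

lemma energy_two_eq_card_quadruples (A B : Finset G) :
    energy 2 A B = (quadruples A B).card := by
  rw [card_eq_sum_card_fiberwise (f := fun p : (G × G) × (G × G) => p.1.1 - p.1.2) (t := A - B)
    fun p hp => by
      simp only [quadruples, coe_filter, mem_product, Set.mem_ofPred_eq] at hp
      exact sub_mem_sub hp.1.1.1 hp.1.1.2]
  refine sum_congr rfl fun x _ => ?_
  have hfiber : {p ∈ quadruples A B | p.1.1 - p.1.2 = x} =
      {p ∈ A ×ˢ B | p.1 - p.2 = x} ×ˢ {p ∈ A ×ˢ B | p.1 - p.2 = x} := by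
    ext ⟨⟨a, b⟩, c, e⟩
    simp only [quadruples, mem_filter, mem_product]
    grind
  rw [hfiber, card_product, rSub, sq]

lemma energy_three_eq_card_triples (A B : Finset G) :
    energy 3 A B = (triples A B).card := by
  rw [card_eq_sum_card_fiberwise
    (f := fun p : (G × G) × (G × G) × (G × G) => p.1.1 - p.1.2) (t := A - B)
    fun p hp => by
      simp only [triples, coe_filter, mem_product, Set.mem_ofPred_eq] at hp
      exact sub_mem_sub hp.1.1.1 hp.1.1.2]
  refine sum_congr rfl fun x _ => ?_
  have hfiber : {p ∈ triples A B | p.1.1 - p.1.2 = x} =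
      {p ∈ A ×ˢ B | p.1 - p.2 = x} ×ˢ {p ∈ A ×ˢ B | p.1 - p.2 = x} ×ˢ
        {p ∈ A ×ˢ B | p.1 - p.2 = x} := by
    ext ⟨⟨a, b⟩, ⟨c, e⟩, u, v⟩
    simp only [triples, mem_filter, mem_product]
    grind
  rw [hfiber, card_product, card_product, rSub]
  ring

def shiftInter (A : Finset G) (s : G) : Finset G := {a ∈ A | a - s ∈ A}

lemma shiftInter_subset (A : Finset G) (s : G) : shiftInter A s ⊆ A := filter_subset _ _

lemma card_shiftInter (A : Finset G) (s : G) : (shiftInter A s).card = rSub A A s :=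
  card_nbij' (fun a => (a, a - s)) Prod.fst (fun a ha => by simp_all [shiftInter])
    (fun p hp => by
      simp only [coe_filter, mem_product, Set.mem_ofPred_eq] at hp
      simp [shiftInter, ← hp.2, hp.1])
    (fun a _ => rfl)
    (fun p hp => by
      simp only [coe_filter, mem_product, Set.mem_ofPred_eq] at hp
      ext <;> simp [← hp.2])

lemma shiftInter_nonempty_iff {A : Finset G} {s : G} :
    (shiftInter A s).Nonempty ↔ s ∈ A - A := by
  simp only [shiftInter, Finset.Nonempty, mem_filter, mem_sub]
  exact ⟨fun ⟨a, ha, hs⟩ => ⟨a, ha, a - s, hs, sub_sub_cancel a s⟩,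
    fun ⟨a, ha, b, hb, hab⟩ => ⟨a, ha, by rwa [← hab, sub_sub_cancel]⟩⟩

lemma rSub_pos_of_mem_sub {A : Finset G} {s : G} (hs : s ∈ A - A) : 0 < rSub A A s := by
  rw [← card_shiftInter, card_pos, shiftInter_nonempty_iff]
  exact hs

lemma card_sub_shiftInter_pos {A : Finset G} {s : G} (hs : s ∈ A - A) :
    0 < (A - shiftInter A s).card := by
  have hAs := shiftInter_nonempty_iff.mpr hs
  exact card_pos.mpr ((hAs.mono (shiftInter_subset A s)).sub hAs)

lemma rSub_le_card (A : Finset G) (s : G) : rSub A A s ≤ A.card :=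
  card_shiftInter A s ▸ card_le_card (shiftInter_subset A s)

lemma card_sub_shiftInter_le (A : Finset G) (s : G) :
    (A - shiftInter A s).card ≤ (A - A).card :=
  card_le_card (sub_subset_sub_left (shiftInter_subset A s))

lemma sum_energy_two_shiftInter_le (A S : Finset G) :
    ∑ s ∈ S, energy 2 A (shiftInter A s) ≤ energy 3 A A := by
  simp only [energy_two_eq_card_quadruples, energy_three_eq_card_triples, ← card_sigma]
  -- `s` is recovered from the image as `b - (b - s)`.
  refine card_le_card_of_injOn
    (fun x => ((x.2.1.1, x.2.2.1), (x.2.1.2, x.2.2.2), (x.2.1.2 - x.1, x.2.2.2 - x.1))) ?_ ?_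
  · rintro ⟨s, ⟨a, b⟩, c, e⟩ hx
    simp only [coe_sigma, Set.mem_sigma_iff, mem_coe, quadruples, shiftInter, mem_filter,
      mem_product] at hx
    simp only [coe_filter, triples, mem_product, Set.mem_ofPred_eq]
    grind
  · rintro ⟨s, ⟨a, b⟩, c, e⟩ - ⟨t, ⟨a', b'⟩, c', e'⟩ - h
    simp only [Prod.mk.injEq] at h
    obtain ⟨⟨rfl, rfl⟩, ⟨rfl, rfl⟩, h, -⟩ := h
    obtain rfl : s = t := by simpa using h
    rfl

lemma sum_rSub_mul_card_sub_shiftInter_le (A S : Finset G) :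
    ∑ s ∈ S, rSub A A s * (A - shiftInter A s).card ≤ energy 2 A (A - A) := by
  simp only [rSub, ← card_product, ← card_sigma, energy_two_eq_card_quadruples]
  -- If `a - a' = s` and `w ∈ A - A_s`, then `a' - w = a - (w + s)` with `w, w + s ∈ A - A`.
  refine card_le_card_of_injOn (fun x => ((x.2.1.2, x.2.2), (x.2.1.1, x.2.2 + x.1))) ?_ ?_
  · rintro ⟨s, ⟨a, a'⟩, w⟩ hx
    simp only [coe_sigma, Set.mem_sigma_iff, mem_coe, mem_product, mem_filter, mem_sub,
      shiftInter] at hx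
    obtain ⟨-, ⟨⟨ha, ha'⟩, rfl⟩, b, hb, c, ⟨hc, hcs⟩, rfl⟩ := hx
    simp only [coe_filter, quadruples, mem_product, mem_sub, Set.mem_ofPred_eq]
    refine ⟨⟨⟨ha', b, hb, c, hc, rfl⟩, ha, b, hb, c - (a - a'), hcs, by abel⟩, by abel⟩
  · rintro ⟨s, ⟨a, a'⟩, w⟩ - ⟨t, ⟨b, b'⟩, v⟩ - h
    simp only [Prod.mk.injEq] at h
    obtain ⟨⟨rfl, rfl⟩, rfl, h⟩ := h
    obtain rfl : s = t := by simpa using h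
    rfl

lemma exists_dyadic_sum_le {ι : Type*} (S : Finset ι) (f w : ι → ℕ) {N : ℕ}
    (hf : ∀ i ∈ S, 0 < f i ∧ f i ≤ N) :
    ∃ j : ℕ, ∃ T ⊆ S, (∀ i ∈ T, 2 ^ j ≤ f i ∧ f i < 2 * 2 ^ j) ∧
      ∑ i ∈ S, w i ≤ (Nat.log 2 N + 1) * ∑ i ∈ T, w i := by
  obtain ⟨j, -, hj⟩ := exists_max_image (range (Nat.log 2 N + 1))
    (fun j => ∑ i ∈ S with Nat.log 2 (f i) = j, w i) nonempty_range_add_one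
  refine ⟨j, {i ∈ S | Nat.log 2 (f i) = j}, filter_subset _ S, fun i hi => ?_, ?_⟩
  · obtain ⟨hiS, rfl⟩ := mem_filter.mp hi
    exact ⟨Nat.pow_log_le_self 2 (hf i hiS).1.ne', by
      simpa [pow_succ, mul_comm] using Nat.lt_pow_succ_log_self one_lt_two (f i)⟩
  · calc ∑ i ∈ S, w i
        = ∑ k ∈ range (Nat.log 2 N + 1), ∑ i ∈ S with Nat.log 2 (f i) = k, w i :=
          (sum_fiberwise_of_maps_to (fun i hi => mem_range_succ_iff.mpr
            (Nat.log_mono_right (hf i hi).2)) w).symm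
      _ ≤ ∑ _k ∈ range (Nat.log 2 N + 1), ∑ i ∈ S with Nat.log 2 (f i) = j, w i :=
          sum_le_sum hj
      _ = (Nat.log 2 N + 1) * ∑ i ∈ S with Nat.log 2 (f i) = j, w i := by simp

lemma exists_popular_differences (A : Finset G) :
    ∃ Q ⊆ A - A, ∃ Δ ρ : ℕ, 0 < ρ ∧
      A.card ^ 2 ≤
        2 * ((Nat.log 2 A.card + 1) * (Nat.log 2 (A - A).card + 1)) * Q.card * Δ ∧
      (∀ s ∈ Q, Δ ≤ rSub A A s) ∧
      ∀ s ∈ Q, (A - shiftInter A s).card ≤ 2 * ρ ∧ ρ ≤ (A - shiftInter A s).card := by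
  obtain ⟨j, P, hPD, hP, hsumP⟩ := exists_dyadic_sum_le (A - A) (rSub A A) (rSub A A)
    fun s hs => ⟨rSub_pos_of_mem_sub hs, rSub_le_card A s⟩
  obtain ⟨i, Q, hQP, hQ, hcardP⟩ :=
    exists_dyadic_sum_le P (fun s => (A - shiftInter A s).card) 1
      fun s hs => ⟨card_sub_shiftInter_pos (hPD hs), card_sub_shiftInter_le A s⟩
  refine ⟨Q, hQP.trans hPD, 2 ^ j, 2 ^ i, by positivity, ?_, fun s hs => (hP s (hQP hs)).1,
    fun s hs => ⟨(hQ s hs).2.le, (hQ s hs).1⟩⟩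
  calc A.card ^ 2 = ∑ s ∈ A - A, rSub A A s := by simp [← energy_one, energy, sq]
    _ ≤ (Nat.log 2 A.card + 1) * ∑ s ∈ P, rSub A A s := hsumP
    _ ≤ (Nat.log 2 A.card + 1) * (P.card * (2 * 2 ^ j)) := by
        gcongr
        simpa using sum_le_card_nsmul P _ _ fun s hs => (hP s hs).2.le
    _ ≤ (Nat.log 2 A.card + 1) * ((Nat.log 2 (A - A).card + 1) * Q.card * (2 * 2 ^ j)) := by
        gcongr
        simpa using hcardP
    _ = _ := by ring

theorem card_pow_eight_le_mul_energy (A : Finset G) :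
    A.card ^ 8 ≤ 16 * ((Nat.log 2 A.card + 1) * (Nat.log 2 (A - A).card + 1)) ^ 3 *
      (A - A).card * energy 3 A A * energy 2 A (A - A) := by
  obtain ⟨Q, hQ, Δ, ρ, hρ, hn, hΔ, hρQ⟩ := exists_popular_differences A
  set J := (Nat.log 2 A.card + 1) * (Nat.log 2 (A - A).card + 1)
  have h₃ : Q.card * (A.card * Δ) ^ 2 ≤ 2 * ρ * energy 3 A A := by
    calc Q.card * (A.card * Δ) ^ 2 ≤ ∑ s ∈ Q, 2 * ρ * energy 2 A (shiftInter A s) := by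
          refine card_nsmul_le_sum Q _ _ fun s hs => ?_
          calc (A.card * Δ) ^ 2 ≤ energy 1 A (shiftInter A s) ^ 2 := by
                rw [energy_one, card_shiftInter]; gcongr; exact hΔ s hs
            _ ≤ energy 0 A (shiftInter A s) * energy 2 A (shiftInter A s) := sq_energy_le rfl _ _
            _ ≤ 2 * ρ * energy 2 A (shiftInter A s) := by
                rw [energy_zero]; gcongr; exact (hρQ s hs).1
      _ = 2 * ρ * ∑ s ∈ Q, energy 2 A (shiftInter A s) := (mul_sum _ _ _).symm
      _ ≤ 2 * ρ * energy 3 A A := by gcongr; exact sum_energy_two_shiftInter_le A Q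
  have h₂ : Q.card * (Δ * ρ) ≤ energy 2 A (A - A) := by
    refine le_trans ?_ (sum_rSub_mul_card_sub_shiftInter_le A Q)
    simpa using card_nsmul_le_sum Q _ _ fun s hs => Nat.mul_le_mul (hΔ s hs) (hρQ s hs).2
  have h₂₃ : Q.card ^ 2 * A.card ^ 2 * Δ ^ 3 ≤ 2 * energy 3 A A * energy 2 A (A - A) := by
    refine le_of_mul_le_mul_right ?_ hρ
    calc _ = (Q.card * (A.card * Δ) ^ 2) * (Q.card * (Δ * ρ)) := by ring
      _ ≤ (2 * ρ * energy 3 A A) * energy 2 A (A - A) := Nat.mul_le_mul h₃ h₂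
      _ = _ := by ring
  calc A.card ^ 8 = (A.card ^ 2) ^ 3 * A.card ^ 2 := by ring
    _ ≤ (2 * J * Q.card * Δ) ^ 3 * A.card ^ 2 := by gcongr
    _ = 8 * J ^ 3 * Q.card * (Q.card ^ 2 * A.card ^ 2 * Δ ^ 3) := by ring
    _ ≤ 8 * J ^ 3 * (A - A).card * (2 * energy 3 A A * energy 2 A (A - A)) := by
        gcongr
    _ = _ := by ring

lemma natLog_add_one_le_four_mul_log {N : ℕ} (hN : 2 ≤ N) :
    (Nat.log 2 N + 1 : ℝ) ≤ 4 * Real.log N := by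
  have hlog2 : 1 / 2 < Real.log 2 := Real.log_two_gt_d9.trans_le' (by norm_num)
  have hlogN : Real.log 2 ≤ Real.log N := Real.log_le_log two_pos (by exact_mod_cast hN)
  have hlogb : Real.logb 2 N ≤ 2 * Real.log N := by
    rw [Real.logb, div_le_iff₀ (by linarith)]
    nlinarith
  have := Real.natLog_le_logb N 2
  push_cast at this
  linarith

lemma card_pow_48_le_of_E4_le (A : Finset G) (hA : A.Nonempty) {d : ℝ}
    (hAA : (E4 A A : ℝ) ≤ d * A.card * A.card ^ 3)
    (hAD : (E4 A (A - A) : ℝ) ≤ d * A.card * (A - A).card ^ 3) :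
    (A.card : ℝ) ^ 48 ≤ 2 ^ 48 *
      ((Nat.log 2 A.card + 1) * (Nat.log 2 (A - A).card + 1) : ℝ) ^ 36 *
        (A - A).card ^ 35 * d ^ 13 := by
  have hcore : (A.card : ℝ) ^ 8 ≤
      16 * ((Nat.log 2 A.card + 1) * (Nat.log 2 (A - A).card + 1) : ℝ) ^ 3 * (A - A).card *
        energy 3 A A * energy 2 A (A - A) := by
    exact_mod_cast card_pow_eight_le_mul_energy A
  have h₃ : (energy 3 A A : ℝ) ^ 4 ≤ (A - A).card * (E4 A A : ℝ) ^ 3 := by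
    exact_mod_cast energy_three_pow_four_le A A
  have h₂ : (energy 2 A (A - A) : ℝ) ^ 3 ≤
      (A.card * (A - A).card) ^ 2 * (E4 A (A - A) : ℝ) := by
    exact_mod_cast energy_two_pow_three_le A (A - A)
  have hn : 0 < (A.card : ℝ) := by simpa using hA.card_pos
  have hK : 0 ≤ ((A - A).card : ℝ) := Nat.cast_nonneg _
  have hE₂ : 0 ≤ (energy 2 A (A - A) : ℝ) := Nat.cast_nonneg _
  have hd : 0 ≤ d := by
    refine nonneg_of_mul_nonneg_left ?_ (pow_pos hn 4)
    simpa [mul_assoc, ← pow_succ'] using (Nat.cast_nonneg _).trans hAA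
  generalize ((Nat.log 2 A.card + 1) * (Nat.log 2 (A - A).card + 1) : ℝ) = J at *
  generalize (A.card : ℝ) = n at *
  generalize ((A - A).card : ℝ) = K at *
  generalize (energy 3 A A : ℝ) = E₃ at *
  generalize (energy 2 A (A - A) : ℝ) = E₂ at *
  refine le_of_mul_le_mul_right ?_ (pow_pos hn 48)
  calc n ^ 48 * n ^ 48 = (n ^ 8) ^ 12 := by ring
    _ ≤ (16 * J ^ 3 * K * E₃ * E₂) ^ 12 := by gcongr
    _ = 2 ^ 48 * J ^ 36 * K ^ 12 * (E₃ ^ 4) ^ 3 * (E₂ ^ 3) ^ 4 := by ring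
    _ ≤ 2 ^ 48 * J ^ 36 * K ^ 12 * (K * (E4 A A : ℝ) ^ 3) ^ 3 *
          ((n * K) ^ 2 * (E4 A (A - A) : ℝ)) ^ 4 := by gcongr
    _ ≤ 2 ^ 48 * J ^ 36 * K ^ 12 * (K * (d * n * n ^ 3) ^ 3) ^ 3 *
          ((n * K) ^ 2 * (d * n * K ^ 3)) ^ 4 := by gcongr
    _ = 2 ^ 48 * J ^ 36 * K ^ 35 * d ^ 13 * n ^ 48 := by ring

end HigherEnergy

open HigherEnergy in
/-- **Small energy implies large difference set.** If `E_4^+(A,B) ≤ d |A| |B|^3` for all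
nonempty `B` (i.e. `d_4^+(A) ≤ d`), then `|A−A|^35 d^13 ≥ C |A|^48 / (log |A|)^c`. -/
theorem diffset_lower_bound_of_small_energy :
    ∃ C : ℝ, 0 < C ∧ ∃ c : ℝ, 0 < c ∧
      ∀ (G : Type) [AddCommGroup G] [DecidableEq G] (A : Finset G) (d : ℝ),
        2 ≤ A.card → 1 ≤ d →
        (∀ B : Finset G, B.Nonempty →
          (E4 A B : ℝ) ≤ d * (A.card : ℝ) * (B.card : ℝ) ^ (3 : ℕ)) →
        C * (A.card : ℝ) ^ (48 : ℕ) / Real.log (A.card : ℝ) ^ c ≤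
          ((A - A).card : ℝ) ^ (35 : ℕ) * d ^ (13 : ℕ) := by
  -- `2 ^ 228 = 2 ^ 48 * 32 ^ 36`, from `card_pow_48_le_of_E4_le` and `hlogs`.
  refine ⟨(2 ^ 228)⁻¹, by positivity, 72, by norm_num, fun G _ _ A d hA hd hE => ?_⟩
  have hA₀ : A.Nonempty := card_pos.mp (by omega)
  have hK : 2 ≤ (A - A).card := hA.trans (card_le_card_sub_left hA₀)
  have hJ' : (Nat.log 2 (A - A).card + 1 : ℝ) ≤ 8 * Real.log A.card := by
    have : Real.log (A - A).card ≤ 2 * Real.log A.card := by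
      calc Real.log (A - A).card ≤ Real.log ((A.card : ℝ) ^ 2) :=
            Real.log_le_log (by exact_mod_cast (by omega : 0 < (A - A).card))
              (by exact_mod_cast card_sub_le.trans_eq (sq _).symm)
        _ = 2 * Real.log A.card := by rw [Real.log_pow]; norm_num
    linarith [natLog_add_one_le_four_mul_log hK]
  have hlogs : ((Nat.log 2 A.card + 1) * (Nat.log 2 (A - A).card + 1) : ℝ) ≤
      32 * Real.log A.card ^ 2 := by
    nlinarith [natLog_add_one_le_four_mul_log hA]
  rw [Real.rpow_ofNat, div_le_iff₀ (pow_pos (Real.log_pos (by exact_mod_cast hA)) 72)]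
  calc (2 ^ 228)⁻¹ * (A.card : ℝ) ^ 48
      ≤ (2 ^ 228)⁻¹ * (2 ^ 48 *
          ((Nat.log 2 A.card + 1) * (Nat.log 2 (A - A).card + 1) : ℝ) ^ 36 *
            (A - A).card ^ 35 * d ^ 13) := by
        gcongr
        exact card_pow_48_le_of_E4_le A hA₀ (hE A hA₀) (hE (A - A) (hA₀.sub hA₀))
    _ ≤ (2 ^ 228)⁻¹ *
          (2 ^ 48 * (32 * Real.log A.card ^ 2) ^ 36 * (A - A).card ^ 35 * d ^ 13) := by
        gcongr
    _ = ((A - A).card : ℝ) ^ 35 * d ^ 13 * Real.log A.card ^ 72 := by ring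
end

section
/- Let G be an abelian group and let A ⊆ G be a finite set. Then E_4^+(A) = Σ_{x ∈ G} Σ_{w ∈ G} E^+(A_x, A_w), where A_x := A ∩ (A + x). -/
open Finset
open scoped Pointwise

/-- The additive energy `E^+(A,B) = Σ_x r_{A−B}(x)^2`; the summand is supported on
the difference set `A − B`. -/
def E2 {G : Type*} [AddCommGroup G] [DecidableEq G] (A B : Finset G) : ℕ :=
  ∑ x ∈ A - B, (rSub A B x) ^ 2

/-!
Writing `A_x = A ∩ (A + x)`, one has `r_{A−A}(x) = |A_x|`, and the set
`A_x ∩ (A_x + s) = A ∩ (A + x) ∩ (A + s) ∩ (A + x + s)` is symmetric in `x` and `s`. Hence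
`Σ_x r_{A_x−A_x}(s) = Σ_x r_{A_s−A_s}(x) = |A_s|² = r_{A−A}(s)²`. Since
`E^+(B, C) = Σ_s r_{B−B}(s) r_{C−C}(s)`, summing `E^+(A_x, A_w)` over `x` and `w` gives
`Σ_s (r_{A−A}(s)²)² = E_4^+(A)`.
-/

lemma Finset.mem_add_singleton_iff {G : Type*} [AddGroup G] [DecidableEq G] {A : Finset G}
    {x a : G} : a ∈ A + {x} ↔ a - x ∈ A := by
  simp [Finset.mem_add, ← eq_sub_iff_add_eq]

section Translates

variable {G : Type*} [AddCommGroup G] [DecidableEq G]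

lemma rSub_eq_card_inter_add_singleton (A B : Finset G) (s : G) :
    rSub A B s = #(A ∩ (B + {s})) := by
  rw [rSub, card_sub_eq, ← card_inter_vadd, add_comm, singleton_add]

lemma sum_rSub_of_sub_subset (A B D : Finset G) (hD : A - B ⊆ D) :
    ∑ x ∈ D, rSub A B x = #A * #B := by
  rw [← card_product]
  refine (card_eq_sum_card_fiberwise fun ab hab => hD ?_).symm
  rw [mem_coe, mem_product] at hab
  exact sub_mem_sub hab.1 hab.2

lemma inter_add_singleton_inter_comm (A : Finset G) (x s : G) :
    A ∩ (A + {x}) ∩ (A ∩ (A + {x}) + {s}) = A ∩ (A + {s}) ∩ (A ∩ (A + {s}) + {x}) := by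
  ext a
  simp only [mem_inter, mem_add_singleton_iff, sub_right_comm a x s]
  tauto

lemma sum_rSub_inter_add_singleton (A : Finset G) (s : G) :
    ∑ x ∈ A - A, rSub (A ∩ (A + {x})) (A ∩ (A + {x})) s = rSub A A s ^ 2 := by
  calc ∑ x ∈ A - A, rSub (A ∩ (A + {x})) (A ∩ (A + {x})) s
      = ∑ x ∈ A - A, rSub (A ∩ (A + {s})) (A ∩ (A + {s})) x := by
        refine sum_congr rfl fun x _ => ?_
        rw [rSub_eq_card_inter_add_singleton, rSub_eq_card_inter_add_singleton,
          inter_add_singleton_inter_comm]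
    _ = #(A ∩ (A + {s})) * #(A ∩ (A + {s})) :=
        sum_rSub_of_sub_subset _ _ _ (sub_subset_sub inter_subset_left inter_subset_left)
    _ = rSub A A s ^ 2 := by rw [rSub_eq_card_inter_add_singleton, sq]

lemma sum_rSub_mul_rSub_of_sub_subset (A B C D E : Finset G) (hE : A - B ⊆ E) :
    ∑ s ∈ E, rSub A B s * rSub C D s =
      #{z ∈ (A ×ˢ B) ×ˢ (C ×ˢ D) | z.1.1 - z.1.2 = z.2.1 - z.2.2} := by
  rw [card_eq_sum_card_fiberwise (f := fun z => z.1.1 - z.1.2) (t := E) fun z hz => by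
    rw [mem_coe, mem_filter, mem_product, mem_product] at hz
    exact hE (sub_mem_sub hz.1.1.1 hz.1.1.2)]
  refine sum_congr rfl fun s _ => ?_
  rw [rSub, rSub, ← card_product, ← filter_product, filter_filter]
  congr 1
  refine filter_congr fun z _ => ?_
  constructor
  · rintro ⟨rfl, h⟩
    exact ⟨h.symm, rfl⟩
  · rintro ⟨h, rfl⟩
    exact ⟨rfl, h.symm⟩

lemma E2_eq_sum_rSub_mul_rSub (B C D : Finset G) (hD : B - B ⊆ D) :
    E2 B C = ∑ s ∈ D, rSub B B s * rSub C C s := by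
  simp_rw [E2, sq]
  rw [sum_rSub_mul_rSub_of_sub_subset _ _ _ _ _ subset_rfl,
    sum_rSub_mul_rSub_of_sub_subset _ _ _ _ _ hD]
  exact card_equiv (Equiv.prodProdProdComm _ _ _ _)
    (by simp [sub_eq_sub_iff_sub_eq_sub, and_and_and_comm])

end Translates

/-- `E_4^+(A) = Σ_{x,w ∈ G} E^+(A_x, A_w)` where `A_x = A ∩ (A + x)`; the summands
are supported on `x, w ∈ A − A`. -/
theorem E4_eq_sum_E2_translates {G : Type*} [AddCommGroup G] [DecidableEq G]
    (A : Finset G) :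
    E4 A A = ∑ x ∈ A - A, ∑ w ∈ A - A, E2 (A ∩ (A + {x})) (A ∩ (A + {w})) := by
  calc E4 A A
      = ∑ s ∈ A - A, (∑ x ∈ A - A, rSub (A ∩ (A + {x})) (A ∩ (A + {x})) s) *
          ∑ w ∈ A - A, rSub (A ∩ (A + {w})) (A ∩ (A + {w})) s := by
        refine sum_congr rfl fun s _ => ?_
        rw [sum_rSub_inter_add_singleton]
        ring
    _ = ∑ x ∈ A - A, ∑ w ∈ A - A, ∑ s ∈ A - A,
          rSub (A ∩ (A + {x})) (A ∩ (A + {x})) s * rSub (A ∩ (A + {w})) (A ∩ (A + {w})) s := by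
        simp_rw [sum_mul_sum]
        rw [sum_comm]
        exact sum_congr rfl fun x _ => sum_comm
    _ = ∑ x ∈ A - A, ∑ w ∈ A - A, E2 (A ∩ (A + {x})) (A ∩ (A + {w})) :=
        sum_congr rfl fun x _ => sum_congr rfl fun w _ => (E2_eq_sum_rSub_mul_rSub _ _ _
          (sub_subset_sub inter_subset_left inter_subset_left)).symm
end

section
/- Let G be an abelian group, let A ⊆ G be a finite set, and let P be any finite subset of A − A. Then (Σ_{x ∈ P} |A_x|)^4 ≤ E_4^+(A) · Σ_{x ∈ P} Σ_{w ∈ P} |A_x − A_w|, and likewise (Σ_{x ∈ P} |A_x|)^4 ≤ E_4^+(A) · Σ_{x ∈ P} Σ_{w ∈ P} |A_x + A_w|, where A_x := A ∩ (A + x). -/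
open Finset
open scoped Pointwise

/-!
Summing `|A_x| |A_w|` over pairs `(x, w) ∈ P × P` gives `(Σ_x |A_x|)²`, and by
Cauchy–Schwarz `(|A_x| |A_w|)² ≤ |A_x ± A_w| E(A_x, A_w)`, so a second Cauchy–Schwarz gives
`(Σ_x |A_x|)⁴ ≤ (Σ_{x,w} |A_x ± A_w|) Σ_{x,w} E(A_x, A_w)`.
For the energies, an additive quadruple `a₁ + b₁ = a₂ + b₂` of `A` is counted once for each `x`
with `a₁, a₂ ∈ A + x` and each `w` with `b₁, b₂ ∈ A + w`; there are at most `r(a₁ - a₂)` of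
each because `b₂ - b₁ = a₁ - a₂`, and summing `r(a₁ - a₂)²` over the quadruples gives `E₄(A)`.
-/

open scoped Combinatorics.Additive

lemma Finset.sum_pow_four_le_of_sq_mul_sq_le_mul {ι R : Type*} [CommSemiring R] [LinearOrder R]
    [IsStrictOrderedRing R] [ExistsAddOfLE R] (s : Finset ι) {u : ι → R} {c e : ι → ι → R}
    (hc : ∀ i ∈ s, ∀ j ∈ s, 0 ≤ c i j) (he : ∀ i ∈ s, ∀ j ∈ s, 0 ≤ e i j)
    (h : ∀ i ∈ s, ∀ j ∈ s, u i ^ 2 * u j ^ 2 ≤ c i j * e i j) :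
    (∑ i ∈ s, u i) ^ 4 ≤ (∑ i ∈ s, ∑ j ∈ s, c i j) * ∑ i ∈ s, ∑ j ∈ s, e i j := calc
  _ = (∑ p ∈ s ×ˢ s, u p.1 * u p.2) ^ 2 := by rw [sum_product, ← sum_mul_sum, ← sq, ← pow_mul]
  _ ≤ (∑ p ∈ s ×ˢ s, c p.1 p.2) * ∑ p ∈ s ×ˢ s, e p.1 p.2 := by
    refine sum_sq_le_sum_mul_sum_of_sq_le_mul _ (fun p hp => ?_) (fun p hp => ?_) fun p hp => ?_
    all_goals rw [mem_product] at hp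
    exacts [hc _ hp.1 _ hp.2, he _ hp.1 _ hp.2, mul_pow (u p.1) _ 2 ▸ h _ hp.1 _ hp.2]
  _ = _ := by rw [sum_product, sum_product]

namespace Finset

variable {G : Type*} [AddCommGroup G] [DecidableEq G]

lemma mem_add_singleton_iff_s9 {s : Finset G} {a x : G} : a ∈ s + {x} ↔ a - x ∈ s := by
  simp [mem_add, ← eq_sub_iff_add_eq]

lemma addEnergy_neg_right (s t : Finset G) : E[s, -t] = E[s, t] := by
  refine card_nbij' (fun q => (q.1, -q.2.2, -q.2.1)) (fun q => (q.1, -q.2.2, -q.2.1))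
    ?_ ?_ (by simp [Set.LeftInvOn]) (by simp [Set.LeftInvOn])
  all_goals
    rintro ⟨⟨a₁, a₂⟩, b₁, b₂⟩
    simp only [coe_filter, mem_product, mem_neg', neg_neg, Set.mem_ofPred_eq]
    rintro ⟨⟨⟨ha₁, ha₂⟩, hb₁, hb₂⟩, h⟩
    refine ⟨⟨⟨ha₁, ha₂⟩, hb₂, hb₁⟩, ?_⟩
    rwa [← sub_eq_add_neg, ← sub_eq_add_neg, sub_eq_sub_iff_add_eq_add]

lemma le_card_sub_mul_addEnergy (s t : Finset G) : #s ^ 2 * #t ^ 2 ≤ #(s - t) * E[s, t] := by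
  simpa [sub_eq_add_neg, addEnergy_neg_right] using le_card_add_mul_addEnergy s (-t)

end Finset

section Translates

variable {G : Type*} [AddCommGroup G] [DecidableEq G]

lemma card_filter_mem_translate_le_rSub (A P : Finset G) (a c : G) :
    #{x ∈ P | a ∈ A + {x} ∧ c ∈ A + {x}} ≤ rSub A A (a - c) := by
  refine card_le_card_of_injOn (fun x => (a - x, c - x)) ?_ fun x _ y _ h => ?_
  · intro x hx
    simp only [coe_filter, mem_add_singleton_iff_s9, Set.mem_ofPred_eq] at hx
    simp [hx.2]
  · exact sub_right_injective (congrArg Prod.fst h)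

lemma card_addEnergy_fiber (s t : Finset G) (y : G) :
    #{q ∈ (s ×ˢ s) ×ˢ t ×ˢ t | q.1.1 + q.2.1 = q.1.2 + q.2.2 ∧ q.1.1 - q.1.2 = y} =
      rSub s s y * rSub t t y := by
  rw [rSub, rSub, ← card_product]
  refine card_nbij' (fun q => (q.1, q.2.2, q.2.1)) (fun p => (p.1, p.2.2, p.2.1))
    ?_ ?_ (by simp [Set.LeftInvOn]) (by simp [Set.LeftInvOn])
  · rintro ⟨⟨a₁, a₂⟩, b₁, b₂⟩
    simp only [coe_filter, coe_product, Set.mem_prod, mem_product, Set.mem_ofPred_eq]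
    rintro ⟨⟨⟨ha₁, ha₂⟩, hb₁, hb₂⟩, h, rfl⟩
    exact ⟨⟨⟨ha₁, ha₂⟩, rfl⟩, ⟨hb₂, hb₁⟩, by rw [sub_eq_sub_iff_add_eq_add, h, add_comm]⟩
  · rintro ⟨⟨a₁, a₂⟩, b₂, b₁⟩
    simp only [coe_filter, coe_product, Set.mem_prod, mem_product, Set.mem_ofPred_eq]
    rintro ⟨⟨⟨ha₁, ha₂⟩, rfl⟩, ⟨hb₂, hb₁⟩, h⟩
    rw [sub_eq_sub_iff_add_eq_add] at h
    exact ⟨⟨⟨ha₁, ha₂⟩, hb₁, hb₂⟩, by rw [← h, add_comm], rfl⟩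

def additiveQuadruples (A : Finset G) : Finset ((G × G) × G × G) :=
  {q ∈ (A ×ˢ A) ×ˢ A ×ˢ A | q.1.1 + q.2.1 = q.1.2 + q.2.2}

lemma mem_additiveQuadruples {A : Finset G} {q : (G × G) × G × G} :
    q ∈ additiveQuadruples A ↔ q ∈ (A ×ˢ A) ×ˢ A ×ˢ A ∧ q.1.1 + q.2.1 = q.1.2 + q.2.2 :=
  mem_filter

lemma sum_additiveQuadruples_rSub_sq_eq_E4 (A : Finset G) :
    ∑ q ∈ additiveQuadruples A, rSub A A (q.1.1 - q.1.2) ^ 2 = E4 A A := by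
  have hmaps : ∀ q ∈ additiveQuadruples A, q.1.1 - q.1.2 ∈ A - A := fun q hq => by
    simp only [mem_additiveQuadruples, mem_product] at hq
    exact sub_mem_sub hq.1.1.1 hq.1.1.2
  rw [E4, ← sum_fiberwise_of_maps_to hmaps, additiveQuadruples]
  refine sum_congr rfl fun y _ => ?_
  rw [sum_congr rfl fun q hq => by rw [(mem_filter.mp hq).2], sum_const, filter_filter,
    card_addEnergy_fiber, smul_eq_mul]
  ring

lemma addEnergy_inter_translate_eq (A : Finset G) (x w : G) :
    E[A ∩ (A + {x}), A ∩ (A + {w})] =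
      ∑ q ∈ additiveQuadruples A,
        (if q.1.1 ∈ A + {x} ∧ q.1.2 ∈ A + {x} then 1 else 0) *
          (if q.2.2 ∈ A + {w} ∧ q.2.1 ∈ A + {w} then 1 else 0) := by
  simp_rw [ite_zero_mul_ite_zero, one_mul, ← card_filter, additiveQuadruples, filter_filter]
  rw [addEnergy]
  congr 1
  ext
  simp only [mem_filter, mem_product, mem_inter]
  tauto

lemma sum_addEnergy_inter_translate_le_E4 (A P : Finset G) :
    ∑ x ∈ P, ∑ w ∈ P, E[A ∩ (A + {x}), A ∩ (A + {w})] ≤ E4 A A := calc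
  _ = ∑ q ∈ additiveQuadruples A,
        #{x ∈ P | q.1.1 ∈ A + {x} ∧ q.1.2 ∈ A + {x}} *
          #{w ∈ P | q.2.2 ∈ A + {w} ∧ q.2.1 ∈ A + {w}} := by
    simp_rw [addEnergy_inter_translate_eq, card_filter, sum_mul_sum]
    exact (sum_congr rfl fun _ _ => sum_comm).trans sum_comm
  _ ≤ ∑ q ∈ additiveQuadruples A, rSub A A (q.1.1 - q.1.2) ^ 2 := by
    refine sum_le_sum fun q hq => ?_
    have hdiff : q.2.2 - q.2.1 = q.1.1 - q.1.2 := by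
      rw [sub_eq_sub_iff_add_eq_add, (mem_additiveQuadruples.mp hq).2, add_comm]
    rw [sq]
    gcongr
    · exact card_filter_mem_translate_le_rSub A P _ _
    · exact hdiff ▸ card_filter_mem_translate_le_rSub A P _ _
  _ = E4 A A := sum_additiveQuadruples_rSub_sq_eq_E4 A

end Translates

theorem sum_card_translates_pow_four_le_general {G : Type*} [AddCommGroup G] [DecidableEq G]
    (A P : Finset G) :
    (∑ x ∈ P, (A ∩ (A + {x})).card) ^ 4 ≤
        E4 A A * ∑ x ∈ P, ∑ w ∈ P, ((A ∩ (A + {x})) - (A ∩ (A + {w}))).card ∧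
      (∑ x ∈ P, (A ∩ (A + {x})).card) ^ 4 ≤
        E4 A A * ∑ x ∈ P, ∑ w ∈ P, ((A ∩ (A + {x})) + (A ∩ (A + {w}))).card := by
  have of_pairwise_bound (T : G → G → Finset G)
      (hT : ∀ x w, #(A ∩ (A + {x})) ^ 2 * #(A ∩ (A + {w})) ^ 2 ≤
        #(T x w) * E[A ∩ (A + {x}), A ∩ (A + {w})]) :
      (∑ x ∈ P, #(A ∩ (A + {x}))) ^ 4 ≤ E4 A A * ∑ x ∈ P, ∑ w ∈ P, #(T x w) := calc
    _ ≤ (∑ x ∈ P, ∑ w ∈ P, #(T x w)) * ∑ x ∈ P, ∑ w ∈ P, E[A ∩ (A + {x}), A ∩ (A + {w})] :=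
      sum_pow_four_le_of_sq_mul_sq_le_mul P (fun _ _ _ _ => Nat.zero_le _)
        (fun _ _ _ _ => Nat.zero_le _) fun x _ w _ => hT x w
    _ ≤ (∑ x ∈ P, ∑ w ∈ P, #(T x w)) * E4 A A :=
      Nat.mul_le_mul_left _ (sum_addEnergy_inter_translate_le_E4 A P)
    _ = _ := mul_comm _ _
  exact ⟨of_pairwise_bound _ fun _ _ => le_card_sub_mul_addEnergy _ _,
    of_pairwise_bound _ fun _ _ => le_card_add_mul_addEnergy _ _⟩

/-- For any `P ⊆ A − A`, writing `A_x = A ∩ (A + x)`, one has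
`(Σ_{x ∈ P} |A_x|)^4 ≤ E_4^+(A) · Σ_{x,w ∈ P} |A_x − A_w|` and likewise with
`A_x + A_w` in place of `A_x − A_w`. -/
theorem sum_card_translates_pow_four_le {G : Type*} [AddCommGroup G] [DecidableEq G]
    (A P : Finset G) (hP : P ⊆ A - A) :
    (∑ x ∈ P, (A ∩ (A + {x})).card) ^ 4 ≤
        E4 A A * ∑ x ∈ P, ∑ w ∈ P, ((A ∩ (A + {x})) - (A ∩ (A + {w}))).card ∧
      (∑ x ∈ P, (A ∩ (A + {x})).card) ^ 4 ≤
        E4 A A * ∑ x ∈ P, ∑ w ∈ P, ((A ∩ (A + {x})) + (A ∩ (A + {w}))).card :=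
  sum_card_translates_pow_four_le_general A P
end

section
/- Let G be an abelian group, let A ⊆ G be a finite nonempty set, and let P be any finite subset of A + A. Then (Σ_{x ∈ P} r_{A+A}(x))^8 ≤ |A|^8 · E_4^+(A) · E^+(P). -/
/-!
Let `K(b, b') = #{a ∈ A | a + b ∈ P ∧ a + b' ∈ P}`. The sum `∑ x ∈ P, r_{A+A}(x)` counts the pairs
`(a, b) ∈ A × A` with `a + b ∈ P`, so Cauchy–Schwarz over `a` bounds its square by `|A| ∑ K`, and
Cauchy–Schwarz over `(b, b')` bounds `(∑ K)²` by `|A|² ∑ K²`.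

Substituting `x = a + b`, `K(b + d, b)` counts the `x ∈ P_d = {x ∈ P | x + d ∈ P}` with `x - b ∈ A`.
Expanding its square over the `b ∈ A` with `b + d ∈ A` gives `∑ K² = ∑_d ∑_{x, y ∈ P_d} W(d, x, y)`,
where `W(d, x, y) = #{b ∈ A | b + d, x - b, y - b ∈ A}`. The index set has `∑_d |P_d|² ≤ E(P)`
elements, and `∑ W² = ∑_{b, c ∈ A} r_{A−A}(b − c)³ = E₄(A)`, because for fixed `b, c` each of
`d, x, y` ranges over `r_{A−A}(b − c)` values. A third Cauchy–Schwarz gives `(∑ K²)² ≤ E(P) E₄(A)`.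
-/

open Finset
open scoped Pointwise

/-- The representation function `r_{A+B}(x) = #{(a,b) ∈ A × B : x = a + b}`. -/
def rAdd {G : Type*} [AddCommGroup G] [DecidableEq G] (A B : Finset G) (x : G) : ℕ :=
  ((A ×ˢ B).filter fun ab => ab.1 + ab.2 = x).card

theorem Finset.sum_sq_card_filter {α β : Type*} (s : Finset α) (t : Finset β)
    (r : α → β → Prop) [∀ a b, Decidable (r a b)] :
    ∑ a ∈ s, #{b ∈ t | r a b} ^ 2 = ∑ p ∈ t ×ˢ t, #{a ∈ s | r a p.1 ∧ r a p.2} := by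
  simp only [card_filter, sq, sum_mul_sum, sum_product, ite_zero_mul_ite_zero, mul_one]
  rw [sum_comm]
  exact sum_congr rfl fun _ _ => sum_comm

section

variable {G : Type*} [AddCommGroup G] [DecidableEq G]

theorem sum_rAdd_eq_sum_card_filter (A B P : Finset G) :
    ∑ x ∈ P, rAdd A B x = ∑ a ∈ A, #{b ∈ B | a + b ∈ P} := by
  simp only [rAdd, card_filter, sum_product]
  rw [sum_comm]
  exact sum_congr rfl fun a _ => by rw [sum_comm]; simp

theorem rSub_eq_card_filter (A B : Finset G) (d : G) : rSub A B d = #{b ∈ B | b + d ∈ A} := by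
  refine card_nbij' Prod.snd (fun b => (b + d, b)) ?_ ?_ ?_ ?_
  · rintro ⟨a, b⟩ h
    simp only [coe_filter, mem_product, Set.mem_ofPred_eq] at h ⊢
    obtain ⟨⟨ha, hb⟩, rfl⟩ := h
    simpa [hb] using ha
  · intro b h
    simp only [coe_filter, mem_product, Set.mem_ofPred_eq] at h ⊢
    simpa using h.symm
  · rintro ⟨a, b⟩ h
    simp only [coe_filter, mem_product, Set.mem_ofPred_eq] at h
    simp [← h.2]
  · intro b _
    rfl

theorem rSub_eq_zero_of_notMem {A B : Finset G} {d : G} (hd : d ∉ A - B) : rSub A B d = 0 := by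
  refine card_eq_zero.2 (filter_eq_empty_iff.2 fun p hp hpd => hd ?_)
  rw [mem_product] at hp
  exact hpd ▸ sub_mem_sub hp.1 hp.2

theorem sum_product_eq_sum_sub {M : Type*} [AddCommMonoid M] (A B : Finset G) (F : G → G → M) :
    ∑ p ∈ A ×ˢ B, F p.1 p.2 = ∑ d ∈ A - B, ∑ b ∈ B with b + d ∈ A, F (b + d) b := by
  have shift (b) (hb : b ∈ B) :
      ∑ a ∈ A, F a b = ∑ d ∈ A - B with b + d ∈ A, F (b + d) b :=
    sum_nbij' (· - b) (b + ·)
      (fun a ha => mem_filter.2 ⟨sub_mem_sub (mem_coe.1 ha) hb, by simpa using ha⟩)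
      (fun d hd => (mem_filter.1 hd).2) (fun a _ => by simp) (fun d _ => by simp)
      (fun a _ => by simp)
  calc ∑ p ∈ A ×ˢ B, F p.1 p.2 = ∑ b ∈ B, ∑ d ∈ A - B with b + d ∈ A, F (b + d) b := by
        rw [sum_product_right]
        exact sum_congr rfl shift
    _ = _ := by
        simp only [sum_filter]
        exact sum_comm

theorem sum_product_sub_eq_sum_rSub_smul {M : Type*} [AddCommMonoid M] (A B : Finset G)
    (f : G → M) : ∑ p ∈ A ×ˢ B, f (p.1 - p.2) = ∑ d ∈ A - B, rSub A B d • f d := by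
  rw [sum_product_eq_sum_sub (F := fun a b => f (a - b))]
  simp [rSub_eq_card_filter]

theorem card_filter_add_mem_add_mem_eq_rSub {A B S : Finset G} {u v : G}
    (hS : ∀ z, z + v ∈ B → z ∈ S) :
    #{z ∈ S | z + u ∈ A ∧ z + v ∈ B} = rSub A B (u - v) := by
  rw [rSub_eq_card_filter]
  refine card_nbij' (· + v) (· - v) ?_ ?_ ?_ ?_
  · intro z hz
    simp only [coe_filter, Set.mem_ofPred_eq] at hz ⊢
    exact ⟨hz.2.2, by rw [add_add_sub_cancel]; exact hz.2.1⟩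
  · intro b hb
    simp only [coe_filter, Set.mem_ofPred_eq] at hb ⊢
    refine ⟨hS _ (by simpa using hb.1), ?_, by simpa using hb.1⟩
    rw [show b - v + u = b + (u - v) by abel]
    exact hb.2
  · intro z _
    simp
  · intro b _
    simp

theorem card_filter_add_mem_add_mem_eq_card_filter_sub_mem (A P : Finset G) (b d : G) :
    #{a ∈ A | a + (b + d) ∈ P ∧ a + b ∈ P} = #{x ∈ {x ∈ P | x + d ∈ P} | x - b ∈ A} := by
  refine card_nbij' (· + b) (· - b) ?_ ?_ ?_ ?_
  · intro a ha
    simp only [coe_filter, mem_filter, Set.mem_ofPred_eq, add_assoc] at ha ⊢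
    simpa [ha.2.2, ha.2.1] using ha.1
  · intro x hx
    simp only [coe_filter, mem_filter, Set.mem_ofPred_eq] at hx ⊢
    rw [show x - b + (b + d) = x + d by abel, sub_add_cancel]
    exact ⟨hx.2, hx.1.2, hx.1.1⟩
  · intro a _
    simp
  · intro x _
    simp

theorem sum_sq_card_filter_add_mem_eq (A P : Finset G) :
    ∑ p ∈ A ×ˢ A, #{a ∈ A | a + p.1 ∈ P ∧ a + p.2 ∈ P} ^ 2 =
      ∑ d ∈ A - A, ∑ q ∈ {x ∈ P | x + d ∈ P} ×ˢ {x ∈ P | x + d ∈ P},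
        #{b ∈ A | b + d ∈ A ∧ q.1 - b ∈ A ∧ q.2 - b ∈ A} := by
  rw [sum_product_eq_sum_sub (F := fun u v => #{a ∈ A | a + u ∈ P ∧ a + v ∈ P} ^ 2)]
  refine sum_congr rfl fun d _ => ?_
  simp only [card_filter_add_mem_add_mem_eq_card_filter_sub_mem]
  rw [sum_sq_card_filter]
  simp only [filter_filter]

theorem E4_self_eq_sum_sq_card_filter (A : Finset G) :
    E4 A A = ∑ d ∈ A - A, ∑ q ∈ (A + A) ×ˢ (A + A),
      #{b ∈ A | b + d ∈ A ∧ q.1 - b ∈ A ∧ q.2 - b ∈ A} ^ 2 := by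
  have key (p) (hp : p ∈ A ×ˢ A) : #{t ∈ (A - A) ×ˢ (A + A) ×ˢ (A + A) |
      (p.1 + t.1 ∈ A ∧ t.2.1 - p.1 ∈ A ∧ t.2.2 - p.1 ∈ A) ∧
        (p.2 + t.1 ∈ A ∧ t.2.1 - p.2 ∈ A ∧ t.2.2 - p.2 ∈ A)} = rSub A A (p.1 - p.2) ^ 3 := by
    obtain ⟨b, c⟩ := p
    obtain ⟨hb, hc⟩ := mem_product.1 hp
    have hd : #{d ∈ A - A | d + b ∈ A ∧ d + c ∈ A} = rSub A A (b - c) :=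
      card_filter_add_mem_add_mem_eq_rSub fun z hz => by simpa using sub_mem_sub hz hc
    have hx : #{x ∈ A + A | x + -c ∈ A ∧ x + -b ∈ A} = rSub A A (b - c) := by
      rw [card_filter_add_mem_add_mem_eq_rSub fun z hz => by simpa using add_mem_add hz hb,
        neg_sub_neg]
    have hsplit : {t ∈ (A - A) ×ˢ (A + A) ×ˢ (A + A) |
        (b + t.1 ∈ A ∧ t.2.1 - b ∈ A ∧ t.2.2 - b ∈ A) ∧
          (c + t.1 ∈ A ∧ t.2.1 - c ∈ A ∧ t.2.2 - c ∈ A)} =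
        {d ∈ A - A | d + b ∈ A ∧ d + c ∈ A} ×ˢ {x ∈ A + A | x + -c ∈ A ∧ x + -b ∈ A} ×ˢ
          {y ∈ A + A | y + -c ∈ A ∧ y + -b ∈ A} := by
      ext ⟨d, x, y⟩
      simp only [mem_filter, mem_product, add_comm _ d, ← sub_eq_add_neg]
      tauto
    rw [hsplit, card_product, card_product, hd, hx]
    ring
  calc E4 A A = ∑ p ∈ A ×ˢ A, rSub A A (p.1 - p.2) ^ 3 := by
        rw [E4, sum_product_sub_eq_sum_rSub_smul (f := fun d => rSub A A d ^ 3)]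
        simp only [smul_eq_mul, ← pow_succ']
    _ = _ := by
        rw [← sum_product' (f := fun (d : G) (q : G × G) =>
            #{b ∈ A | b + d ∈ A ∧ q.1 - b ∈ A ∧ q.2 - b ∈ A} ^ 2), sum_sq_card_filter]
        exact (sum_congr rfl key).symm

theorem sq_sum_sq_card_filter_add_mem_le {A P : Finset G} (hP : P ⊆ A + A) :
    (∑ p ∈ A ×ˢ A, #{a ∈ A | a + p.1 ∈ P ∧ a + p.2 ∈ P} ^ 2) ^ 2 ≤ E2 P P * E4 A A := by
  set W : G → G × G → ℕ := fun d q => #{b ∈ A | b + d ∈ A ∧ q.1 - b ∈ A ∧ q.2 - b ∈ A}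
  set T := (A - A).sigma fun d => {x ∈ P | x + d ∈ P} ×ˢ {x ∈ P | x + d ∈ P}
  have hT : #T ≤ E2 P P := by
    rw [card_sigma, E2]
    simp only [card_product, ← sq, ← rSub_eq_card_filter]
    exact sum_le_sum_of_ne_zero fun d _ hd =>
      by_contra fun h => hd (by simp [rSub_eq_zero_of_notMem h])
  have hW : ∑ t ∈ T, W t.1 t.2 ^ 2 ≤ E4 A A := by
    rw [sum_sigma, E4_self_eq_sum_sq_card_filter]
    gcongr <;> exact (filter_subset _ P).trans hP
  calc _ = (∑ t ∈ T, W t.1 t.2) ^ 2 := by rw [sum_sq_card_filter_add_mem_eq, sum_sigma]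
    _ ≤ #T * ∑ t ∈ T, W t.1 t.2 ^ 2 := sq_sum_le_card_mul_sum_sq
    _ ≤ E2 P P * E4 A A := by gcongr

end

theorem sum_rAdd_pow_eight_le_general {G : Type*} [AddCommGroup G] [DecidableEq G]
    (A P : Finset G) (hP : P ⊆ A + A) :
    (∑ x ∈ P, rAdd A A x) ^ 8 ≤ A.card ^ 8 * E4 A A * E2 P P := by
  have hS : (∑ x ∈ P, rAdd A A x) ^ 2 ≤
      #A * ∑ p ∈ A ×ˢ A, #{a ∈ A | a + p.1 ∈ P ∧ a + p.2 ∈ P} := by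
    rw [sum_rAdd_eq_sum_card_filter, ← sum_sq_card_filter A A fun a b => a + b ∈ P]
    exact sq_sum_le_card_mul_sum_sq
  set S := ∑ x ∈ P, rAdd A A x
  set K : G × G → ℕ := fun p => #{a ∈ A | a + p.1 ∈ P ∧ a + p.2 ∈ P}
  have hK : (∑ p ∈ A ×ˢ A, K p) ^ 2 ≤ #A ^ 2 * ∑ p ∈ A ×ˢ A, K p ^ 2 := by
    simpa [card_product, sq] using sq_sum_le_card_mul_sum_sq (s := A ×ˢ A) (f := K)
  calc S ^ 8 = (S ^ 2) ^ 4 := by ring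
    _ ≤ (#A * ∑ p ∈ A ×ˢ A, K p) ^ 4 := by gcongr
    _ = #A ^ 4 * ((∑ p ∈ A ×ˢ A, K p) ^ 2) ^ 2 := by ring
    _ ≤ #A ^ 4 * (#A ^ 2 * ∑ p ∈ A ×ˢ A, K p ^ 2) ^ 2 := by gcongr
    _ = #A ^ 8 * (∑ p ∈ A ×ˢ A, K p ^ 2) ^ 2 := by ring
    _ ≤ #A ^ 8 * (E2 P P * E4 A A) := by gcongr; exact sq_sum_sq_card_filter_add_mem_le hP
    _ = #A ^ 8 * E4 A A * E2 P P := by ring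

/-- **Eigenvalue lemma, sum version.** For any `P ⊆ A + A`,
`(Σ_{x ∈ P} r_{A+A}(x))^8 ≤ |A|^8 · E_4^+(A) · E^+(P)`. -/
theorem sum_rAdd_pow_eight_le {G : Type*} [AddCommGroup G] [DecidableEq G]
    (A P : Finset G) (hA : A.Nonempty) (hP : P ⊆ A + A) :
    (∑ x ∈ P, rAdd A A x) ^ 8 ≤ A.card ^ 8 * E4 A A * E2 P P :=
  sum_rAdd_pow_eight_le_general A P hP
end

section
/- Let G be an abelian group, let A ⊆ G be a finite nonempty set, and let P be any finite subset of A − A. Then (Σ_{x ∈ P} r_{A−A}(x))^8 ≤ |A|^8 · E_4^+(A) · E^+(P). -/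
/-!
Join `c ∈ A` to `a ∈ A` when `c - a ∈ P`; the sum on the left counts the edges of this
bipartite graph. Cauchy–Schwarz on degrees and then on codegrees
bounds the fourth power of the edge count by `|A|⁴` times the number of labelled 4-cycles
`c a c' a'`. The edge differences `(c - a, c' - a, c - a', c' - a')` of a 4-cycle lie in `P⁴` and
satisfy `u₁ - u₂ = u₃ - u₄`; there are `E⁺(P)` such quadruples, so Cauchy–Schwarz over the fibres
bounds the square of the number of 4-cycles by `E⁺(P)` times the number of pairs of 4-cycles with
equal differences. Such a pair `(c a c' a', d b d' b')` has `c - d = a - b = c' - d' = a' - b'`,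
so there are at most `E₄⁺(A)` of them.
-/

open Finset
open scoped Pointwise

namespace Finset

variable {α β : Type*} [DecidableEq β] {s : Finset α} {t : Finset β} {f : α → β}

theorem sum_card_fiberwise_sq_eq_card_filter (hf : ∀ x ∈ s, f x ∈ t) :
    ∑ y ∈ t, #{x ∈ s | f x = y} ^ 2 = #{p ∈ s ×ˢ s | f p.1 = f p.2} := by
  rw [card_eq_sum_card_fiberwise (f := fun p => f p.1) (t := t)
    fun p hp => hf _ (mem_product.1 (mem_filter.1 hp).1).1]
  refine sum_congr rfl fun y _ => ?_
  rw [sq, ← card_product, filter_filter]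
  congr 1
  ext ⟨x, x'⟩
  simp only [mem_product, mem_filter]
  constructor
  · rintro ⟨⟨hx, rfl⟩, hx', h⟩
    exact ⟨⟨hx, hx'⟩, h.symm, rfl⟩
  · rintro ⟨⟨hx, hx'⟩, h, rfl⟩
    exact ⟨⟨hx, rfl⟩, hx', h.symm⟩

theorem sq_card_le_card_mul_card_filter_eq (hf : ∀ x ∈ s, f x ∈ t) :
    #s ^ 2 ≤ #t * #{p ∈ s ×ˢ s | f p.1 = f p.2} := by
  rw [← sum_card_fiberwise_sq_eq_card_filter hf, card_eq_sum_card_fiberwise hf]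
  exact sq_sum_le_card_mul_sum_sq

end Finset

namespace Rel

variable {α β : Type*} (r : α → β → Prop) [∀ a b, Decidable (r a b)] (s : Finset α) (t : Finset β)

/-- Labelled 4-cycles `a b a' b'` of the bipartite graph of `r`, encoded as `((a, a'), (b, b'))`;
degenerate ones are included. -/
def fourCycles : Finset ((α × α) × (β × β)) :=
  {q ∈ (s ×ˢ s) ×ˢ (t ×ˢ t) | r q.1.1 q.2.1 ∧ r q.1.2 q.2.1 ∧ r q.1.1 q.2.2 ∧ r q.1.2 q.2.2}

theorem card_fourCycles :
    #(fourCycles r s t) = ∑ p ∈ s ×ˢ s, #{b ∈ t | r p.1 b ∧ r p.2 b} ^ 2 := by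
  rw [fourCycles, card_filter, sum_product]
  refine sum_congr rfl fun p _ => ?_
  rw [sq, ← card_product, ← card_filter]
  congr 1
  ext ⟨b, b'⟩
  simp only [mem_product, mem_filter]
  tauto

theorem sum_card_bipartiteBelow_sq :
    ∑ b ∈ t, #(s.bipartiteBelow r b) ^ 2 = ∑ p ∈ s ×ˢ s, #{b ∈ t | r p.1 b ∧ r p.2 b} := by
  refine Eq.trans ?_ (sum_card_bipartiteAbove_eq_sum_card_bipartiteBelow
    (fun (p : α × α) b => r p.1 b ∧ r p.2 b) (s := s ×ˢ s) (t := t)).symm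
  refine sum_congr rfl fun b _ => ?_
  rw [sq, ← card_product]
  congr 1
  ext ⟨a, a'⟩
  simp only [mem_product, mem_bipartiteBelow]
  tauto

theorem card_interedges_pow_four_le :
    #(interedges r s t) ^ 4 ≤ #s ^ 2 * #t ^ 2 * #(fourCycles r s t) := by
  have hedges : #(interedges r s t) = ∑ b ∈ t, #(s.bipartiteBelow r b) := by
    simp only [interedges, bipartiteBelow, card_filter, sum_product_right]
  calc #(interedges r s t) ^ 4 = ((∑ b ∈ t, #(s.bipartiteBelow r b)) ^ 2) ^ 2 := by
        rw [hedges, ← pow_mul]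
    _ ≤ (#t * ∑ b ∈ t, #(s.bipartiteBelow r b) ^ 2) ^ 2 := by
        gcongr; exact sq_sum_le_card_mul_sum_sq
    _ = #t ^ 2 * (∑ p ∈ s ×ˢ s, #{b ∈ t | r p.1 b ∧ r p.2 b}) ^ 2 := by
        rw [sum_card_bipartiteBelow_sq, mul_pow]
    _ ≤ #t ^ 2 * (#(s ×ˢ s) * ∑ p ∈ s ×ˢ s, #{b ∈ t | r p.1 b ∧ r p.2 b} ^ 2) := by
        gcongr; exact sq_sum_le_card_mul_sum_sq
    _ = #s ^ 2 * #t ^ 2 * #(fourCycles r s t) := by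
        rw [card_fourCycles, card_product]; ring

end Rel

section Difference

variable {G : Type*} [AddCommGroup G] [DecidableEq G]

theorem sum_rSub_eq_card_interedges (A P : Finset G) :
    ∑ x ∈ P, rSub A A x = #(Rel.interedges (fun c a => c - a ∈ P) A A) :=
  sum_card_fiberwise_eq_card_filter _ _ _

theorem E2_eq_card_filter (P : Finset G) :
    E2 P P = #{q ∈ (P ×ˢ P) ×ˢ (P ×ˢ P) | q.1.1 - q.1.2 = q.2.1 - q.2.2} :=
  sum_card_fiberwise_sq_eq_card_filter fun _ hp =>
    sub_mem_sub (mem_product.1 hp).1 (mem_product.1 hp).2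

def diffProfile (q : (G × G) × (G × G)) : (G × G) × (G × G) :=
  ((q.1.1 - q.2.1, q.1.2 - q.2.1), (q.1.1 - q.2.2, q.1.2 - q.2.2))

theorem card_filter_diffProfile_eq_le_E4 (A : Finset G) :
    #{w ∈ ((A ×ˢ A) ×ˢ (A ×ˢ A)) ×ˢ ((A ×ˢ A) ×ˢ (A ×ˢ A)) |
      diffProfile w.1 = diffProfile w.2} ≤ E4 A A := by
  set F : G → Finset (G × G) := fun x => {p ∈ A ×ˢ A | p.1 - p.2 = x}
  rw [card_eq_sum_card_fiberwise (f := fun w => w.1.1.1 - w.2.1.1) (t := A - A) ?maps, E4]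
  case maps =>
    intro w hw
    simp only [mem_coe, mem_filter, mem_product] at hw
    exact sub_mem_sub hw.1.1.1.1 hw.1.2.1.1
  refine sum_le_sum fun x _ => ?_
  calc _ ≤ #(F x ×ˢ F x ×ˢ F x ×ˢ F x) := by
        refine card_le_card_of_injOn (fun w =>
          ((w.1.1.1, w.2.1.1), (w.1.1.2, w.2.1.2), (w.1.2.1, w.2.2.1), (w.1.2.2, w.2.2.2))) ?_ ?_
        · rintro ⟨⟨⟨c, c'⟩, a, a'⟩, ⟨d, d'⟩, b, b'⟩ hw
          simp only [mem_coe, mem_filter, mem_product, diffProfile, Prod.mk.injEq, F] at hw ⊢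
          obtain ⟨⟨⟨⟨⟨hc, hc'⟩, ha, ha'⟩, ⟨hd, hd'⟩, hb, hb'⟩, ⟨e1, e2⟩, e3, -⟩, hx⟩ := hw
          have hab : a - b = x := (sub_eq_sub_iff_sub_eq_sub.mp e1).symm.trans hx
          exact ⟨⟨⟨hc, hd⟩, hx⟩, ⟨⟨hc', hd'⟩, (sub_eq_sub_iff_sub_eq_sub.mp e2).trans hab⟩,
            ⟨⟨ha, hb⟩, hab⟩, ⟨ha', hb'⟩, (sub_eq_sub_iff_sub_eq_sub.mp e3).symm.trans hx⟩
        · rintro _ - _ - h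
          simp only [Prod.mk.injEq] at h
          ext <;> simp only [h]
    _ = rSub A A x ^ 4 := by simp only [card_product, F, rSub]; ring

theorem card_fourCycles_sq_le (A P : Finset G) :
    #(Rel.fourCycles (fun c a => c - a ∈ P) A A) ^ 2 ≤ E2 P P * E4 A A := by
  set C := Rel.fourCycles (fun c a => c - a ∈ P) A A
  have hmaps : ∀ q ∈ C,
      diffProfile q ∈ {q ∈ (P ×ˢ P) ×ˢ (P ×ˢ P) | q.1.1 - q.1.2 = q.2.1 - q.2.2} := by
    rintro ⟨⟨c, c'⟩, a, a'⟩ hq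
    simp only [C, Rel.fourCycles, mem_filter, mem_product] at hq
    simp only [diffProfile, mem_filter, mem_product]
    exact ⟨⟨⟨hq.2.1, hq.2.2.1⟩, hq.2.2.2.1, hq.2.2.2.2⟩, by abel⟩
  have hC : C ⊆ (A ×ˢ A) ×ˢ (A ×ˢ A) := filter_subset _ _
  calc #C ^ 2 ≤ _ * #{w ∈ C ×ˢ C | diffProfile w.1 = diffProfile w.2} :=
        sq_card_le_card_mul_card_filter_eq hmaps
    _ ≤ E2 P P * E4 A A := by
        rw [E2_eq_card_filter]
        gcongr
        exact (card_le_card (filter_subset_filter _ (product_subset_product hC hC))).trans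
          (card_filter_diffProfile_eq_le_E4 A)

end Difference

theorem sum_rSub_pow_eight_le_general {G : Type*} [AddCommGroup G] [DecidableEq G]
    (A P : Finset G) :
    (∑ x ∈ P, rSub A A x) ^ 8 ≤ A.card ^ 8 * E4 A A * E2 P P := by
  calc (∑ x ∈ P, rSub A A x) ^ 8 = (#(Rel.interedges (fun c a => c - a ∈ P) A A) ^ 4) ^ 2 := by
        rw [sum_rSub_eq_card_interedges, ← pow_mul]
    _ ≤ (#A ^ 2 * #A ^ 2 * #(Rel.fourCycles (fun c a => c - a ∈ P) A A)) ^ 2 := by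
        gcongr; exact Rel.card_interedges_pow_four_le _ _ _
    _ = #A ^ 8 * #(Rel.fourCycles (fun c a => c - a ∈ P) A A) ^ 2 := by ring
    _ ≤ #A ^ 8 * (E2 P P * E4 A A) := by gcongr; exact card_fourCycles_sq_le A P
    _ = A.card ^ 8 * E4 A A * E2 P P := by ring

/-- **Eigenvalue lemma, difference version.** For any `P ⊆ A − A`,
`(Σ_{x ∈ P} r_{A−A}(x))^8 ≤ |A|^8 · E_4^+(A) · E^+(P)`. -/
theorem sum_rSub_pow_eight_le {G : Type*} [AddCommGroup G] [DecidableEq G]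
    (A P : Finset G) (hA : A.Nonempty) (hP : P ⊆ A - A) :
    (∑ x ∈ P, rSub A A x) ^ 8 ≤ A.card ^ 8 * E4 A A * E2 P P :=
  sum_rSub_pow_eight_le_general A P
end

section
/- Let G be an abelian group, let A ⊆ G be a finite set, and let P ⊆ G be a finite set. Then (Σ_{x, y, z, w ∈ A} 1_P(x + y) · 1_P(y + z) · 1_P(z + w) · 1_P(w + x))^2 ≤ E^+(P) · E_4^+(A), where 1_P is the indicator function of P. -/
/-!
With `M = (1_P(a + b))_{a, b ∈ A}`, the left-hand side is `(tr M⁴)²`, and `tr M⁴` counts the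
closed walks `x → y → z → w → x` in the graph on `A` joining `a` and `b` when `a + b ∈ P`. The
edge sums `(x + y, y + z)` and `(w + x, z + w)` of such a walk have the common difference `x - z`,
so they form a quadruple counted by `E^+(P)`. Cauchy–Schwarz over the fibres of this map bounds
the squared number of walks by `E^+(P)` times the number of pairs of walks with equal edge sums,
and such pairs embed into the quadruples counted by `E_4^+(A)`.
-/

open Finset
open scoped Pointwise

namespace Finset

variable {α β : Type*} [DecidableEq β]

theorem card_sq_le_card_mul_card_filter_apply_eq {s : Finset α} {t : Finset β} {f : α → β}
    (hf : Set.MapsTo f s t) : #s ^ 2 ≤ #t * #{p ∈ s ×ˢ s | f p.1 = f p.2} := by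
  have hpairs : Set.MapsTo (fun p : α × α => f p.1)
      ({p ∈ s ×ˢ s | f p.1 = f p.2} : Finset (α × α)) t :=
    fun p hp => hf (mem_product.1 (mem_filter.1 hp).1).1
  calc #s ^ 2 = (∑ b ∈ t, #{a ∈ s | f a = b}) ^ 2 := by rw [card_eq_sum_card_fiberwise hf]
    _ ≤ #t * ∑ b ∈ t, #{a ∈ s | f a = b} ^ 2 := sq_sum_le_card_mul_sum_sq
    _ = #t * #{p ∈ s ×ˢ s | f p.1 = f p.2} := by
      rw [card_eq_sum_card_fiberwise hpairs]
      refine congrArg _ (sum_congr rfl fun b _ => ?_)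
      rw [sq, ← card_product, ← filter_product, filter_filter]
      refine congrArg _ (filter_congr fun p _ => ?_)
      constructor
      · rintro ⟨h₁, h₂⟩
        exact ⟨h₁.trans h₂.symm, h₁⟩
      · rintro ⟨h, h₁⟩
        exact ⟨h₁, h ▸ h₁⟩

end Finset

section
variable {G : Type*} [AddCommGroup G] [DecidableEq G]

def commonDiffTuples (A B : Finset G) (n : ℕ) : Finset (Fin (n + 1) → G × G) :=
  {f ∈ Fintype.piFinset fun _ => A ×ˢ B | ∀ i, (f i).1 - (f i).2 = (f 0).1 - (f 0).2}

theorem mem_commonDiffTuples {A B : Finset G} {n : ℕ} {f : Fin (n + 1) → G × G} :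
    f ∈ commonDiffTuples A B n ↔
      (∀ i, (f i).1 ∈ A ∧ (f i).2 ∈ B) ∧ ∀ i, (f i).1 - (f i).2 = (f 0).1 - (f 0).2 := by
  simp [commonDiffTuples]

theorem sum_rSub_pow_succ_eq_card_commonDiffTuples (A B : Finset G) (n : ℕ) :
    ∑ d ∈ A - B, rSub A B d ^ (n + 1) = #(commonDiffTuples A B n) := by
  have hmaps : Set.MapsTo (fun f : Fin (n + 1) → G × G => (f 0).1 - (f 0).2)
      (commonDiffTuples A B n) (A - B : Finset G) := fun f hf =>
    have hf₀ := (mem_commonDiffTuples.1 hf).1 0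
    sub_mem_sub hf₀.1 hf₀.2
  rw [card_eq_sum_card_fiberwise hmaps]
  refine sum_congr rfl fun d _ => ?_
  rw [rSub, ← Fintype.card_piFinset_const]
  congr 1
  ext f
  simp only [mem_filter, mem_commonDiffTuples, Fintype.mem_piFinset, mem_product]
  grind

theorem E2_eq_card_commonDiffTuples (A B : Finset G) : E2 A B = #(commonDiffTuples A B 1) :=
  sum_rSub_pow_succ_eq_card_commonDiffTuples A B 1

theorem E4_eq_card_commonDiffTuples (A B : Finset G) : E4 A B = #(commonDiffTuples A B 3) :=
  sum_rSub_pow_succ_eq_card_commonDiffTuples A B 3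

def closedSumWalks (A P : Finset G) : Finset (G × G × G × G) :=
  {t ∈ A ×ˢ A ×ˢ A ×ˢ A |
    t.1 + t.2.1 ∈ P ∧ t.2.1 + t.2.2.1 ∈ P ∧ t.2.2.1 + t.2.2.2 ∈ P ∧ t.2.2.2 + t.1 ∈ P}

theorem mem_closedSumWalks {A P : Finset G} {x y z w : G} :
    (x, y, z, w) ∈ closedSumWalks A P ↔
      (x ∈ A ∧ y ∈ A ∧ z ∈ A ∧ w ∈ A) ∧ x + y ∈ P ∧ y + z ∈ P ∧ z + w ∈ P ∧ w + x ∈ P := by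
  simp [closedSumWalks]

theorem sum_indicator_eq_card_closedSumWalks (A P : Finset G) :
    (∑ x ∈ A, ∑ y ∈ A, ∑ z ∈ A, ∑ w ∈ A,
        (if x + y ∈ P then 1 else 0) * (if y + z ∈ P then 1 else 0) *
          (if z + w ∈ P then 1 else 0) * (if w + x ∈ P then 1 else 0)) =
      #(closedSumWalks A P) := by
  simp only [closedSumWalks, card_filter, sum_product, ite_zero_mul_ite_zero, mul_one, and_assoc]

def edgeSums (t : G × G × G × G) : Fin 2 → G × G :=
  ![(t.1 + t.2.1, t.2.1 + t.2.2.1), (t.2.2.2 + t.1, t.2.2.1 + t.2.2.2)]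

theorem mapsTo_edgeSums_closedSumWalks (A P : Finset G) :
    Set.MapsTo edgeSums (closedSumWalks A P : Set (G × G × G × G))
      (commonDiffTuples P P 1 : Set (Fin 2 → G × G)) := by
  rintro ⟨x, y, z, w⟩ ht
  obtain ⟨-, hxy, hyz, hzw, hwx⟩ := mem_closedSumWalks.1 ht
  refine mem_commonDiffTuples.2 ⟨Fin.forall_fin_two.2 ⟨⟨hxy, hyz⟩, ⟨hwx, hzw⟩⟩,
    Fin.forall_fin_two.2 ⟨rfl, ?_⟩⟩
  change w + x - (z + w) = x + y - (y + z)
  abel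

/-- Two walks with equal edge sums satisfy `x - x' = y' - y = z - z' = w' - w`, so the pair is
recorded injectively by the four pairs `(x, x'), (y', y), (z, z'), (w', w)`. -/
theorem card_filter_edgeSums_eq_le_E4 (A P : Finset G) :
    #{p ∈ closedSumWalks A P ×ˢ closedSumWalks A P | edgeSums p.1 = edgeSums p.2} ≤ E4 A A := by
  rw [E4_eq_card_commonDiffTuples]
  refine card_le_card_of_injOn
    (fun ⟨(x, y, z, w), (x', y', z', w')⟩ => ![(x, x'), (y', y), (z, z'), (w', w)]) ?_ ?_
  · rintro ⟨⟨x, y, z, w⟩, ⟨x', y', z', w'⟩⟩ hp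
    simp only [coe_filter, Set.mem_ofPred_eq, mem_product, mem_closedSumWalks] at hp
    obtain ⟨⟨⟨⟨hx, hy, hz, hw⟩, -⟩, ⟨hx', hy', hz', hw'⟩, -⟩, heq⟩ := hp
    obtain ⟨hxy, hyz⟩ : x + y = x' + y' ∧ y + z = y' + z' := Prod.ext_iff.1 (congrFun heq 0)
    obtain ⟨hwx, -⟩ : w + x = w' + x' ∧ z + w = z' + w' := Prod.ext_iff.1 (congrFun heq 1)
    rw [mem_coe, mem_commonDiffTuples]
    simp only [Fin.forall_fin_succ, Fin.isValue, Matrix.cons_val_zero, Matrix.cons_val_succ,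
      Matrix.cons_val_fin_one, forall_const, true_and]
    refine ⟨⟨⟨hx, hx'⟩, ⟨hy', hy⟩, ⟨hz, hz'⟩, hw', hw⟩, ?_, ?_, ?_⟩ <;> grind
  · rintro ⟨⟨x, y, z, w⟩, ⟨x', y', z', w'⟩⟩ - ⟨⟨u, v, s, r⟩, ⟨u', v', s', r'⟩⟩ - h
    simp_all [funext_iff, Fin.forall_fin_succ]

end

/-- **Trace bound:** for finite `A, P ⊆ G`,
`(Σ_{x,y,z,w ∈ A} 1_P(x+y) 1_P(y+z) 1_P(z+w) 1_P(w+x))^2 ≤ E^+(P) · E_4^+(A)`. -/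
theorem trace_pow_two_le_energy {G : Type*} [AddCommGroup G] [DecidableEq G]
    (A P : Finset G) :
    (∑ x ∈ A, ∑ y ∈ A, ∑ z ∈ A, ∑ w ∈ A,
        (if x + y ∈ P then 1 else 0) * (if y + z ∈ P then 1 else 0) *
          (if z + w ∈ P then 1 else 0) * (if w + x ∈ P then 1 else 0)) ^ 2 ≤
      E2 P P * E4 A A := by
  rw [sum_indicator_eq_card_closedSumWalks]
  calc #(closedSumWalks A P) ^ 2
      ≤ #(commonDiffTuples P P 1) *
          #{p ∈ closedSumWalks A P ×ˢ closedSumWalks A P | edgeSums p.1 = edgeSums p.2} :=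
        card_sq_le_card_mul_card_filter_apply_eq (mapsTo_edgeSums_closedSumWalks A P)
    _ ≤ E2 P P * E4 A A := by
        rw [E2_eq_card_commonDiffTuples]
        exact Nat.mul_le_mul_left _ (card_filter_edgeSums_eq_le_E4 A P)
end
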